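/- arXiv:0902.4125 — 7 statements merged into one kernel-verified Lean document; each statement's English description precedes it below -/
import Mathlib

section
/- A maximal set of non-intersecting arcs has at most one right-fountain and at most one left-fountain; that is, if 𝔄 is a maximal set of non-intersecting arcs, then there is at most one integer which is a right-fountain of 𝔄, and at most one integer which is a left-fountain of 𝔄. -/
/-- An arc is a pair `(m,n)` of integers with `m ≤ n - 2`. -/
def IsArc (x : ℤ × ℤ) : Prop := x.1 ≤ x.2 - 2

/-- Arcs `(m,n)` and `(p,q)` intersect if `m < p < n < q` or `p < m < q < n`. -/
def Intersects (x y : ℤ × ℤ) : Prop :=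
  (x.1 < y.1 ∧ y.1 < x.2 ∧ x.2 < y.2) ∨ (y.1 < x.1 ∧ x.1 < y.2 ∧ y.2 < x.2)

/-- A set of arcs, no two of which intersect. -/
def NonIntersecting (A : Set (ℤ × ℤ)) : Prop :=
  (∀ x ∈ A, IsArc x) ∧ ∀ x ∈ A, ∀ y ∈ A, ¬ Intersects x y

/-- A maximal set of non-intersecting arcs: every arc not in the set
intersects some arc of the set. -/
def MaximalNonIntersecting (A : Set (ℤ × ℤ)) : Prop :=
  NonIntersecting A ∧ ∀ x, IsArc x → x ∉ A → ∃ a ∈ A, Intersects x a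

/-- `n` is a left-fountain of `A` if `A` contains infinitely many arcs `(m,n)`. -/
def LeftFountain (A : Set (ℤ × ℤ)) (n : ℤ) : Prop :=
  { m : ℤ | (m, n) ∈ A }.Infinite

/-- `n` is a right-fountain of `A` if `A` contains infinitely many arcs `(n,p)`. -/
def RightFountain (A : Set (ℤ × ℤ)) (n : ℤ) : Prop :=
  { p : ℤ | (n, p) ∈ A }.Infinite

/-- `A` is locally finite if for each integer `n` only finitely many arcs of `A`
end in `n`. -/
def LocallyFiniteArcs (A : Set (ℤ × ℤ)) : Prop :=
  ∀ n : ℤ, { x ∈ A | x.1 = n ∨ x.2 = n }.Finite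

/-- The region `H⁻(x)` for `x = (i,j)`. -/
def Hminus (x : ℤ × ℤ) : Set (ℤ × ℤ) :=
  { y | y.1 ≤ x.1 - 1 ∧ x.1 + 1 ≤ y.2 ∧ y.2 ≤ x.2 - 1 }

/-- The region `H⁺(x)` for `x = (i,j)`. -/
def Hplus (x : ℤ × ℤ) : Set (ℤ × ℤ) :=
  { y | x.1 + 1 ≤ y.1 ∧ y.1 ≤ x.2 - 1 ∧ x.2 + 1 ≤ y.2 }

/-- The region `H(x) = H⁻(x) ∪ H⁺(x)`. -/
def Hset (x : ℤ × ℤ) : Set (ℤ × ℤ) := Hminus x ∪ Hplus x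

/-- The suspension `Σ` in coordinates: `Σ(m,n) = (m-1,n-1)`. -/
def Sig (x : ℤ × ℤ) : ℤ × ℤ := (x.1 - 1, x.2 - 1)

/-- The inverse suspension `Σ⁻¹` in coordinates: `Σ⁻¹(m,n) = (m+1,n+1)`. -/
def SigInv (x : ℤ × ℤ) : ℤ × ℤ := (x.1 + 1, x.2 + 1)

/-- The Serre functor `S = Σ²` in coordinates: `S(m,n) = (m-2,n-2)`. -/
def Serre (x : ℤ × ℤ) : ℤ × ℤ := (x.1 - 2, x.2 - 2)



lemma exists_gt_of_infinite_bddBelow (S : Set ℤ) (hS : S.Infinite) (lo : ℤ)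
    (hlo : ∀ x ∈ S, lo ≤ x) (b : ℤ) : ∃ x ∈ S, b < x := by
  by_contra h
  push_neg at h
  exact hS ((Set.finite_Icc lo b).subset fun x hx => ⟨hlo x hx, h x hx⟩)

lemma exists_lt_of_infinite_bddAbove (S : Set ℤ) (hS : S.Infinite) (hi : ℤ)
    (hhi : ∀ x ∈ S, x ≤ hi) (b : ℤ) : ∃ x ∈ S, x < b := by
  by_contra h
  push_neg at h
  exact hS ((Set.finite_Icc b hi).subset fun x hx => ⟨h x hx, hhi x hx⟩)

/-- A maximal set of non-intersecting arcs has at most one right-fountain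
and at most one left-fountain. -/
theorem at_most_one_fountain (A : Set (ℤ × ℤ)) (hA : MaximalNonIntersecting A) :
    (∀ n₁ n₂ : ℤ, RightFountain A n₁ → RightFountain A n₂ → n₁ = n₂) ∧
    (∀ n₁ n₂ : ℤ, LeftFountain A n₁ → LeftFountain A n₂ → n₁ = n₂) := by
  obtain ⟨⟨harc, hni⟩, _⟩ := hA
  constructor
  · intro n₁ n₂ h₁ h₂
    by_contra hne
    wlog hlt : n₁ < n₂ generalizing n₁ n₂
    · exact this n₂ n₁ h₂ h₁ (Ne.symm hne) (lt_of_le_of_ne (not_lt.mp hlt) (Ne.symm hne))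
    obtain ⟨p, hp, hpgt⟩ := exists_gt_of_infinite_bddBelow _ h₁ (n₁ + 2)
      (fun x hx => by have h := harc _ hx; simp only [IsArc] at h; linarith) n₂
    obtain ⟨q, hq, hqgt⟩ := exists_gt_of_infinite_bddBelow _ h₂ (n₂ + 2)
      (fun x hx => by have h := harc _ hx; simp only [IsArc] at h; linarith) p
    exact hni _ hp _ hq (Or.inl ⟨hlt, hpgt, hqgt⟩)
  · intro n₁ n₂ h₁ h₂
    by_contra hne
    wlog hlt : n₁ < n₂ generalizing n₁ n₂
    · exact this n₂ n₁ h₂ h₁ (Ne.symm hne) (lt_of_le_of_ne (not_lt.mp hlt) (Ne.symm hne))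
    obtain ⟨m₂, hm₂, hm₂lt⟩ := exists_lt_of_infinite_bddAbove _ h₂ (n₂ - 2)
      (fun x hx => by have h := harc _ hx; simp only [IsArc] at h; linarith) n₁
    obtain ⟨m₁, hm₁, hm₁lt⟩ := exists_lt_of_infinite_bddAbove _ h₁ (n₁ - 2)
      (fun x hx => by have h := harc _ hx; simp only [IsArc] at h; linarith) m₂
    exact hni _ hm₁ _ hm₂ (Or.inl ⟨hm₁lt, hm₂lt, hlt⟩)
end

section
/- Let a = (i,j) and b = (m,n) be arcs with a ≠ b which do not intersect. If b ∈ H(Σa), then a ∉ H(Σb). -/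
/-- No 2-cycles: for distinct non-intersecting arcs `a`, `b`,
if `b ∈ H(Σa)` then `a ∉ H(Σb)`. -/
theorem no_two_cycles (a b : ℤ × ℤ) (ha : IsArc a) (hb : IsArc b)
    (hne : a ≠ b) (hni : ¬ Intersects a b) (h : b ∈ Hset (Sig a)) :
    a ∉ Hset (Sig b) := by
  have hne' : a.1 ≠ b.1 ∨ a.2 ≠ b.2 := by
    by_contra hc
    push_neg at hc
    exact hne (Prod.ext hc.1 hc.2)
  simp only [Hset, Hminus, Hplus, Sig, Intersects, IsArc, Set.mem_union,
    Set.mem_setOf_eq] at *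
  omega
end

section
/- Let 𝔄 be a maximal set of non-intersecting arcs which has a fountain at the integer v. Then for every integer w ≠ v, only finitely many arcs of 𝔄 end in w. -/
/-- If a maximal set of non-intersecting arcs has a fountain at `v`, then only
finitely many of its arcs end in any integer `w ≠ v`. -/
theorem fountain_locally_finite_away (A : Set (ℤ × ℤ))
    (hA : MaximalNonIntersecting A) (v : ℤ)
    (hl : LeftFountain A v) (hr : RightFountain A v)
    (w : ℤ) (hw : w ≠ v) :
    { x ∈ A | x.1 = w ∨ x.2 = w }.Finite := by
  obtain ⟨⟨harc, hni⟩, -⟩ := hA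
  rcases lt_or_gt_of_ne hw with hwv | hwv
  · -- w < v : pick a left-fountain arc (m0, v) with m0 < w
    obtain ⟨m0, hm0A, hm0n⟩ := (hl.diff (Set.finite_Icc w v)).nonempty
    have hm0arc : m0 ≤ v - 2 := harc _ hm0A
    simp only [Set.mem_Icc, not_and, not_le] at hm0n
    have hm0w : m0 < w := by omega
    apply Set.Finite.subset ((Set.finite_Icc m0 v).prod (Set.finite_Icc m0 v))
    rintro ⟨x1, x2⟩ ⟨hxA, hx⟩
    have hxarc : x1 ≤ x2 - 2 := harc _ hxA
    have hnI := hni _ hxA _ hm0A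
    unfold Intersects at hnI
    simp only [not_or, not_and, not_lt] at hnI
    simp only [Set.mem_prod, Set.mem_Icc]
    rcases hnI with ⟨h1, h2⟩
    omega
  · -- w > v : pick a right-fountain arc (v, q0) with q0 > w
    obtain ⟨q0, hq0A, hq0n⟩ := (hr.diff (Set.finite_Icc v w)).nonempty
    have hq0arc : v ≤ q0 - 2 := harc _ hq0A
    simp only [Set.mem_Icc, not_and, not_le] at hq0n
    have hq0w : w < q0 := by omega
    apply Set.Finite.subset ((Set.finite_Icc v q0).prod (Set.finite_Icc v q0))
    rintro ⟨x1, x2⟩ ⟨hxA, hx⟩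
    have hxarc : x1 ≤ x2 - 2 := harc _ hxA
    have hnI := hni _ hxA _ hq0A
    unfold Intersects at hnI
    simp only [not_or, not_and, not_lt] at hnI
    simp only [Set.mem_prod, Set.mem_Icc]
    rcases hnI with ⟨h1, h2⟩
    omega
end

section
/- Let 𝔄 be a maximal set of non-intersecting arcs and let m be a right-fountain of 𝔄. If (p,q) ∈ 𝔄 is an arc with p < m, then q ≤ m. -/
/-- If `m` is a right-fountain of a maximal set of non-intersecting arcs, then
any arc `(p,q)` of the set with `p < m` satisfies `q ≤ m`. -/
theorem arc_left_of_right_fountain (A : Set (ℤ × ℤ))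
    (hA : MaximalNonIntersecting A) (m : ℤ) (hm : RightFountain A m)
    (p q : ℤ) (hpq : (p, q) ∈ A) (hp : p < m) :
    q ≤ m := by
  by_contra hq
  push_neg at hq
  -- pick r > q with (m,r) ∈ A
  have hsub : { p : ℤ | (m, p) ∈ A } ⊆ Set.Ici (m+2) ∪ Set.Ioi q := by
    intro r hr
    rcases le_or_gt r q with h | h
    · left
      have := hA.1.1 _ hr
      simp [IsArc] at this
      simp only [Set.mem_Ici]
      omega
    · right; exact h
  have : ∃ r ∈ { p : ℤ | (m, p) ∈ A }, q < r := by
    by_contra hc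
    push_neg at hc
    exact hm (Set.Finite.subset (Set.finite_Icc (m+2) q) (fun r hr => by
      have h1 := hA.1.1 _ hr
      simp [IsArc] at h1
      exact ⟨by omega, hc r hr⟩))
  obtain ⟨r, hr, hqr⟩ := this
  exact hA.1.2 (p, q) hpq (m, r) hr (Or.inl ⟨hp, hq, hqr⟩)
end

section
/- Let 𝔄 be a maximal set of non-intersecting arcs and let m be a left-fountain of 𝔄. If (p,q) ∈ 𝔄 is an arc with q > m, then p ≥ m. -/
/-- If `m` is a left-fountain of a maximal set of non-intersecting arcs, then
any arc `(p,q)` of the set with `q > m` satisfies `p ≥ m`. -/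
theorem arc_right_of_left_fountain (A : Set (ℤ × ℤ))
    (hA : MaximalNonIntersecting A) (m : ℤ) (hm : LeftFountain A m)
    (p q : ℤ) (hpq : (p, q) ∈ A) (hq : q > m) :
    p ≥ m := by
  by_contra h
  push_neg at h
  -- Find k ∈ {k | (k,m) ∈ A} with k < p.
  have hk : ∃ k, (k, m) ∈ A ∧ k < p := by
    by_contra hk
    push_neg at hk
    have hsub : { k : ℤ | (k, m) ∈ A } ⊆ Set.Icc p (m - 2) := by
      intro k hkA
      exact ⟨hk k hkA, hA.1.1 _ hkA⟩
    exact hm ((Set.finite_Icc p (m - 2)).subset hsub)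
  obtain ⟨k, hkA, hkp⟩ := hk
  exact hA.1.2 (k, m) hkA (p, q) hpq (Or.inl ⟨hkp, h, hq⟩)
end

section
/- Let 𝔄 be a maximal set of non-intersecting arcs which has a fountain at the integer v, and let x be any arc. Then only finitely many arcs of 𝔄 which do not end in v intersect x. -/
/-- If a maximal set of non-intersecting arcs has a fountain at `v`, then any
arc is intersected by only finitely many arcs of the set not ending in `v`. -/
theorem fountain_finitely_many_intersecting_away (A : Set (ℤ × ℤ))
    (hA : MaximalNonIntersecting A) (v : ℤ)
    (hl : LeftFountain A v) (hr : RightFountain A v)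
    (x : ℤ × ℤ) (hx : IsArc x) :
    { a ∈ A | a.1 ≠ v ∧ a.2 ≠ v ∧ Intersects a x }.Finite := by
  obtain ⟨⟨hArc, hNI⟩, _⟩ := hA
  -- pick a left-fountain arc with left end < x.1
  have hM : ∃ m0, (m0, v) ∈ A ∧ m0 < x.1 := by
    by_contra h
    push_neg at h
    exact hl (Set.Finite.subset (Set.finite_Icc x.1 (v - 2))
      (fun m hm => ⟨h m hm, hArc _ hm⟩))
  -- pick a right-fountain arc with right end > x.2
  have hP : ∃ p0, (v, p0) ∈ A ∧ x.2 < p0 := by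
    by_contra h
    push_neg at h
    refine hr (Set.Finite.subset (Set.finite_Icc (v + 2) x.2)
      (fun p hp => ⟨?_, h p hp⟩))
    have := hArc _ hp
    simp only [IsArc] at this
    omega
  obtain ⟨m0, hm0A, hm0⟩ := hM
  obtain ⟨p0, hp0A, hp0⟩ := hP
  have hm0v : m0 ≤ v - 2 := hArc _ hm0A
  have hvp0 : v ≤ p0 - 2 := hArc _ hp0A
  apply Set.Finite.subset ((Set.finite_Icc m0 p0).prod (Set.finite_Icc m0 p0))
  rintro ⟨p, q⟩ ⟨haA, h1, h2, hInt⟩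
  simp only [ne_eq] at h1 h2
  have hpq : p ≤ q - 2 := hArc _ haA
  -- key: a cannot straddle v
  have hstraddle : ¬ (p < v ∧ v < q) := by
    rintro ⟨hpv, hvq⟩
    -- find a left-fountain arc with left end < p
    have : ∃ m, (m, v) ∈ A ∧ m < p := by
      by_contra h
      push_neg at h
      exact hl (Set.Finite.subset (Set.finite_Icc p (v - 2))
        (fun m hm => ⟨h m hm, hArc _ hm⟩))
    obtain ⟨m, hmA, hmp⟩ := this
    exact hNI _ hmA _ haA (Or.inl ⟨hmp, hpv, hvq⟩)
  have hInt' : (p < x.1 ∧ x.1 < q ∧ q < x.2) ∨ (x.1 < p ∧ p < x.2 ∧ x.2 < q) := hInt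
  -- case split on which side of v
  rcases lt_or_gt_of_ne h2 with hq | hq
  · -- q < v
    have hpb : m0 ≤ p := by
      rcases hInt' with ⟨hpx, hxq, hqx⟩ | ⟨hxp, _, _⟩
      · by_contra h
        push_neg at h
        exact hNI _ haA _ hm0A (Or.inl ⟨by omega, by omega, hq⟩)
      · omega
    constructor <;> simp <;> omega
  · -- v < q, so by no-straddling and p ≠ v, v < p
    have hvp : v < p := by
      rcases lt_or_gt_of_ne h1 with h | h
      · exact absurd ⟨h, hq⟩ hstraddle
      · exact h
    have hqb : q ≤ p0 := by
      rcases hInt' with ⟨_, _, hqx⟩ | ⟨hxp, hpx, hxq⟩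
      · omega
      · by_contra h
        push_neg at h
        exact hNI _ haA _ hp0A (Or.inr ⟨hvp, by omega, by omega⟩)
    constructor <;> simp <;> omega
end

section
/- Let 𝔄 be a maximal set of non-intersecting arcs which is locally finite or has a fountain, and let 𝔞 ∈ 𝔄. Then there exists exactly one arc 𝔞* ≠ 𝔞 such that (𝔄 \ {𝔞}) ∪ {𝔞*} is again a maximal set of non-intersecting arcs. -/
namespace ArcAux

lemma intersects_mk {u v s t : ℤ}
    (h : (u < s ∧ s < v ∧ v < t) ∨ (s < u ∧ u < t ∧ t < v)) :
    Intersects (u, v) (s, t) := h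

lemma intersects_elim {u v s t : ℤ} (h : Intersects (u, v) (s, t)) :
    (u < s ∧ s < v ∧ v < t) ∨ (s < u ∧ u < t ∧ t < v) := h

lemma intersects_comm {x y : ℤ × ℤ} (h : Intersects x y) : Intersects y x :=
  Or.elim h Or.inr Or.inl

lemma isArc_mk {u v : ℤ} (h : u ≤ v - 2) : IsArc (u, v) := h

lemma isArc_elim {u v : ℤ} (h : IsArc (u, v)) : u ≤ v - 2 := h

/-- `(i,j)` is an "edge": either an arc of `A` or a boundary segment. -/
def Edge (A : Set (ℤ × ℤ)) (i j : ℤ) : Prop := (i, j) ∈ A ∨ j = i + 1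

def Inner (A : Set (ℤ × ℤ)) (m n p : ℤ) : Prop :=
  m < p ∧ p < n ∧ Edge A m p ∧ Edge A p n

def OutR (A : Set (ℤ × ℤ)) (m n q : ℤ) : Prop :=
  n < q ∧ (m, q) ∈ A ∧ Edge A n q

def OutL (A : Set (ℤ × ℤ)) (m n q : ℤ) : Prop :=
  q < m ∧ (q, n) ∈ A ∧ Edge A q m

lemma exists_gt_of_infinite {S : Set ℤ} (hS : S.Infinite) {l : ℤ}
    (hl : ∀ x ∈ S, l ≤ x) (N : ℤ) : ∃ x ∈ S, N < x := by
  by_contra hcon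
  push_neg at hcon
  exact hS ((Set.finite_Icc l N).subset fun x hx => ⟨hl x hx, hcon x hx⟩)

lemma exists_lt_of_infinite {S : Set ℤ} (hS : S.Infinite) {u : ℤ}
    (hu : ∀ x ∈ S, x ≤ u) (N : ℤ) : ∃ x ∈ S, x < N := by
  by_contra hcon
  push_neg at hcon
  exact hS ((Set.finite_Icc N u).subset fun x hx => ⟨hcon x hx, hu x hx⟩)

end ArcAux

namespace ArcAux

variable {A : Set (ℤ × ℤ)}

lemma inner_exists (hA : MaximalNonIntersecting A) {m n : ℤ} (ha : (m, n) ∈ A) :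
    ∃ p, Inner A m n p := by
  have nc := hA.1.2
  have hmn : m ≤ n - 2 := hA.1.1 _ ha
  obtain ⟨p, ⟨hp1, hp2, hp3⟩, hgr⟩ :=
    Int.exists_greatest_of_bdd (P := fun j => m < j ∧ j < n ∧ Edge A m j)
      ⟨n, fun z hz => le_of_lt hz.2.1⟩
      ⟨m + 1, by omega, by omega, Or.inr rfl⟩
  refine ⟨p, hp1, hp2, hp3, ?_⟩
  by_cases hpn1 : n = p + 1
  · exact Or.inr hpn1
  by_cases hpn : (p, n) ∈ A
  · exact Or.inl hpn
  obtain ⟨⟨u, v⟩, hc, hx⟩ := hA.2 (p, n) (isArc_mk (by omega)) hpn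
  exfalso
  rcases intersects_elim hx with ⟨h1, h2, h3⟩ | ⟨h1, h2, h3⟩
  · exact nc _ ha _ hc (intersects_mk (by omega))
  · rcases lt_trichotomy u m with h4 | h4 | h4
    · exact nc _ ha _ hc (intersects_mk (by omega))
    · subst h4
      have := hgr v ⟨by omega, by omega, Or.inl hc⟩
      omega
    · rcases hp3 with hmp | hmp
      · exact nc _ hmp _ hc (intersects_mk (by omega))
      · omega

lemma inner_unique (hA : MaximalNonIntersecting A) {m n p p' : ℤ}
    (hp : Inner A m n p) (hp' : Inner A m n p') : p = p' := by
  obtain ⟨h1, h2, h3, h4⟩ := hp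
  obtain ⟨h1', h2', h3', h4'⟩ := hp'
  have nc := hA.1.2
  rcases lt_trichotomy p p' with h | h | h
  · -- (m,p') ∈ A and (p,n) ∈ A cross
    exfalso
    rcases h3' with hmp' | hmp'
    · rcases h4 with hpn | hpn
      · exact nc _ hmp' _ hpn (intersects_mk (by omega))
      · omega
    · omega
  · exact h
  · exfalso
    rcases h3 with hmp | hmp
    · rcases h4' with hpn | hpn
      · exact nc _ hmp _ hpn (intersects_mk (by omega))
      · omega
    · omega

lemma outR_unique (hA : MaximalNonIntersecting A) {m n q q' : ℤ} (hmn : m < n)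
    (hq : OutR A m n q) (hq' : OutR A m n q') : q = q' := by
  obtain ⟨h1, h2, h3⟩ := hq
  obtain ⟨h1', h2', h3'⟩ := hq'
  have nc := hA.1.2
  rcases lt_trichotomy q q' with h | h | h
  · exfalso
    rcases h3' with hnq | hnq
    · exact nc _ h2 _ hnq (intersects_mk (by omega))
    · omega
  · exact h
  · exfalso
    rcases h3 with hnq | hnq
    · exact nc _ h2' _ hnq (intersects_mk (by omega))
    · omega

lemma outL_unique (hA : MaximalNonIntersecting A) {m n q q' : ℤ} (hmn : m < n)
    (hq : OutL A m n q) (hq' : OutL A m n q') : q = q' := by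
  obtain ⟨h1, h2, h3⟩ := hq
  obtain ⟨h1', h2', h3'⟩ := hq'
  have nc := hA.1.2
  rcases lt_trichotomy q q' with h | h | h
  · exfalso
    rcases h3 with hqm | hqm
    · exact nc _ hqm _ h2' (intersects_mk (by omega))
    · omega
  · exact h
  · exfalso
    rcases h3' with hqm | hqm
    · exact nc _ hqm _ h2 (intersects_mk (by omega))
    · omega

lemma outRL_false (hA : MaximalNonIntersecting A) {m n q q' : ℤ}
    (hmn : m < n) (hq : OutR A m n q) (hq' : OutL A m n q') : False := by
  obtain ⟨h1, h2, h3⟩ := hq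
  obtain ⟨h1', h2', h3'⟩ := hq'
  exact hA.1.2 _ h2' _ h2 (intersects_mk (by omega))

end ArcAux

namespace ArcAux

variable {A : Set (ℤ × ℤ)}

lemma outer_exists (hA : MaximalNonIntersecting A)
    (h : LocallyFiniteArcs A ∨ ∃ v : ℤ, LeftFountain A v ∧ RightFountain A v)
    {m n : ℤ} (ha : (m, n) ∈ A) :
    (∃ q, OutR A m n q) ∨ (∃ q, OutL A m n q) := by
  have nc := hA.1.2
  have harc := hA.1.1
  have hmn : m ≤ n - 2 := harc _ ha
  by_cases hR : ∃ r, n < r ∧ (m, r) ∈ A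
  · -- right case: take the least such r
    left
    obtain ⟨q, ⟨hq1, hq2⟩, hle⟩ :=
      Int.exists_least_of_bdd (P := fun r => n < r ∧ (m, r) ∈ A)
        ⟨n + 1, fun z hz => by omega⟩ hR
    refine ⟨q, hq1, hq2, ?_⟩
    by_cases hqe : q = n + 1
    · exact Or.inr hqe
    by_cases hnq : (n, q) ∈ A
    · exact Or.inl hnq
    exfalso
    obtain ⟨⟨u, v⟩, hc, hx⟩ := hA.2 (n, q) (isArc_mk (by omega)) hnq
    rcases intersects_elim hx with ⟨h1, h2, h3⟩ | ⟨h1, h2, h3⟩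
    · exact nc _ hq2 _ hc (intersects_mk (by omega))
    · rcases lt_trichotomy u m with h4 | h4 | h4
      · exact nc _ hq2 _ hc (intersects_mk (by omega))
      · subst h4
        have := hle v ⟨by omega, hc⟩
        omega
      · exact nc _ ha _ hc (intersects_mk (by omega))
  by_cases hL : ∃ l, l < m ∧ (l, n) ∈ A
  · -- left case: take the greatest such l
    right
    obtain ⟨q, ⟨hq1, hq2⟩, hge⟩ :=
      Int.exists_greatest_of_bdd (P := fun l => l < m ∧ (l, n) ∈ A)
        ⟨m, fun z hz => by omega⟩ hL
    refine ⟨q, hq1, hq2, ?_⟩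
    by_cases hqe : m = q + 1
    · exact Or.inr hqe
    by_cases hqm : (q, m) ∈ A
    · exact Or.inl hqm
    exfalso
    obtain ⟨⟨u, v⟩, hc, hx⟩ := hA.2 (q, m) (isArc_mk (by omega)) hqm
    rcases intersects_elim hx with ⟨h1, h2, h3⟩ | ⟨h1, h2, h3⟩
    · rcases lt_trichotomy v n with h4 | h4 | h4
      · exact nc _ ha _ hc (intersects_mk (by omega))
      · subst h4
        have := hge u ⟨by omega, hc⟩
        omega
      · exact nc _ hq2 _ hc (intersects_mk (by omega))
    · exact nc _ hq2 _ hc (intersects_mk (by omega))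
  -- no arc from m to the right of n, none from the left of m to n;
  -- we derive a contradiction
  exfalso
  push_neg at hR hL
  by_cases hC : ∃ c ∈ A, c.1 < m ∧ n < c.2
  · -- Case II: some arc properly contains (m,n); take one with greatest left end
    obtain ⟨u, ⟨v, hv, hum, hnv⟩, hge⟩ :=
      Int.exists_greatest_of_bdd (P := fun s => ∃ t, (s, t) ∈ A ∧ s < m ∧ n < t)
        ⟨m, fun z hz => by obtain ⟨t, _, h1, _⟩ := hz; omega⟩
        (by obtain ⟨⟨s, t⟩, hc, h1, h2⟩ := hC; exact ⟨s, t, hc, h1, h2⟩)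
    have hun : (u, n) ∉ A := fun hmem => hL u hum hmem
    obtain ⟨⟨s, t⟩, hd, hx⟩ := hA.2 (u, n) (isArc_mk (by omega)) hun
    rcases intersects_elim hx with ⟨h1, h2, h3⟩ | ⟨h1, h2, h3⟩
    · rcases lt_trichotomy s m with h4 | h4 | h4
      · have := hge s ⟨t, hd, h4, h3⟩
        omega
      · subst h4
        exact hR t h3 hd
      · exact nc _ ha _ hd (intersects_mk (by omega))
    · exact nc _ hv _ hd (intersects_mk (by omega))
  · -- Case III: nothing contains (m,n) and nothing extends it
    push_neg at hC
    rcases h with hLF | ⟨v, hvL, hvR⟩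
    · -- locally finite case
      -- Step 1: there is an arc (n, w₀) in A
      have hstep1 : ∃ w, (n, w) ∈ A := by
        have hm1 : (m, n + 1) ∉ A := fun hmem => hR (n + 1) (by omega) hmem
        obtain ⟨⟨s, t⟩, hd, hx⟩ := hA.2 (m, n + 1) (isArc_mk (by omega)) hm1
        rcases intersects_elim hx with ⟨h1, h2, h3⟩ | ⟨h1, h2, h3⟩
        · rcases lt_trichotomy s n with h4 | h4 | h4
          · exact absurd (intersects_mk (by omega)) (nc _ ha _ hd)
          · subst h4; exact ⟨t, hd⟩
          · omega
        · rcases lt_trichotomy t n with h4 | h4 | h4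
          · exact absurd (intersects_mk (by omega)) (nc _ ha _ hd)
          · subst h4; exact (hL s h1 hd).elim
          · omega
      -- Step 2: the set of such w is finite, take the greatest
      have hNfin : {w : ℤ | (n, w) ∈ A}.Finite := by
        have : {w : ℤ | (n, w) ∈ A} ⊆ Prod.snd '' {x ∈ A | x.1 = n ∨ x.2 = n} :=
          fun w hw => ⟨(n, w), ⟨hw, Or.inl rfl⟩, rfl⟩
        exact ((hLF n).image Prod.snd).subset this
      obtain ⟨b, hb⟩ := hNfin.bddAbove
      obtain ⟨w, hw, hge⟩ :=
        Int.exists_greatest_of_bdd (P := fun w => (n, w) ∈ A)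
          ⟨b, fun z hz => hb hz⟩ hstep1
      have hwarc : n ≤ w - 2 := harc _ hw
      -- Step 3: (m, w) crosses nothing, contradiction
      have hmw : (m, w) ∉ A := fun hmem => hR w (by omega) hmem
      obtain ⟨⟨s, t⟩, hd, hx⟩ := hA.2 (m, w) (isArc_mk (by omega)) hmw
      rcases intersects_elim hx with ⟨h1, h2, h3⟩ | ⟨h1, h2, h3⟩
      · rcases lt_trichotomy s n with h4 | h4 | h4
        · exact nc _ ha _ hd (intersects_mk (by omega))
        · subst h4
          have := hge t hd
          omega
        · exact nc _ hw _ hd (intersects_mk (by omega))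
      · rcases lt_trichotomy t n with h4 | h4 | h4
        · exact nc _ ha _ hd (intersects_mk (by omega))
        · subst h4; exact hL s h1 hd
        · have : t ≤ n := hC (s, t) hd h1
          omega
    · -- fountain case
      rcases le_or_gt v m with hvm | hvm
      · have hbd : ∀ p ∈ {p : ℤ | (v, p) ∈ A}, v + 2 ≤ p := by
          intro p hp
          have := isArc_elim (harc _ hp)
          omega
        obtain ⟨p, hp, hnp⟩ := exists_gt_of_infinite hvR hbd n
        rcases eq_or_lt_of_le hvm with heq | hlt
        · subst heq; exact hR p hnp hp
        · have : p ≤ n := hC (v, p) hp hlt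
          omega
      · rcases lt_or_ge v n with hvn | hvn
        · have hbd : ∀ l ∈ {l : ℤ | (l, v) ∈ A}, l ≤ v - 2 := by
            intro l hl
            have := isArc_elim (harc _ hl)
            omega
          obtain ⟨l, hl, hlm⟩ := exists_lt_of_infinite hvL hbd m
          exact nc _ ha _ hl (intersects_mk (by omega))
        · have hbd : ∀ l ∈ {l : ℤ | (l, v) ∈ A}, l ≤ v - 2 := by
            intro l hl
            have := isArc_elim (harc _ hl)
            omega
          obtain ⟨l, hl, hlm⟩ := exists_lt_of_infinite hvL hbd m
          rcases eq_or_lt_of_le hvn with heq | hlt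
          · subst heq; exact hL l hlm hl
          · have : v ≤ n := hC (l, v) hl hlm
            omega

end ArcAux

namespace ArcAux

variable {A : Set (ℤ × ℤ)}

lemma flip_works_right (hA : MaximalNonIntersecting A) {m n p q : ℤ}
    (ha : (m, n) ∈ A) (hI : Inner A m n p) (hO : OutR A m n q) :
    (p, q) ∉ A ∧ IsArc (p, q) ∧ Intersects (p, q) (m, n) ∧
      ∀ c ∈ A, c ≠ (m, n) → ¬ Intersects (p, q) c := by
  obtain ⟨hmp, hpn, hEmp, hEpn⟩ := hI
  obtain ⟨hnq, hmq, hEnq⟩ := hO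
  have nc := hA.1.2
  have hmn : m ≤ n - 2 := hA.1.1 _ ha
  have hcross : Intersects (p, q) (m, n) := intersects_mk (by omega)
  refine ⟨fun hmem => nc _ hmem _ ha hcross, isArc_mk (by omega), hcross, ?_⟩
  rintro ⟨s, t⟩ hc hne hx
  rcases intersects_elim hx with ⟨h1, h2, h3⟩ | ⟨h1, h2, h3⟩
  · rcases lt_or_ge s n with h4 | h4
    · exact nc _ ha _ hc (intersects_mk (by omega))
    · exact nc _ hmq _ hc (intersects_mk (by omega))
  · rcases lt_trichotomy t n with h4 | h4 | h4
    · rcases lt_trichotomy s m with h5 | h5 | h5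
      · exact nc _ ha _ hc (intersects_mk (by omega))
      · subst h5
        rcases hEpn with hpn' | hpn'
        · exact nc _ hc _ hpn' (intersects_mk (by omega))
        · omega
      · rcases hEmp with hmp' | hmp'
        · exact nc _ hmp' _ hc (intersects_mk (by omega))
        · omega
    · subst h4
      rcases lt_trichotomy s m with h5 | h5 | h5
      · exact nc _ hc _ hmq (intersects_mk (by omega))
      · exact hne (by rw [h5])
      · rcases hEmp with hmp' | hmp'
        · exact nc _ hmp' _ hc (intersects_mk (by omega))
        · omega
    · rcases lt_trichotomy s m with h5 | h5 | h5
      · exact nc _ hmq _ hc (intersects_mk (by omega))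
      · subst h5
        rcases hEnq with hnq' | hnq'
        · exact nc _ hc _ hnq' (intersects_mk (by omega))
        · omega
      · exact nc _ ha _ hc (intersects_mk (by omega))

lemma flip_works_left (hA : MaximalNonIntersecting A) {m n p q : ℤ}
    (ha : (m, n) ∈ A) (hI : Inner A m n p) (hO : OutL A m n q) :
    (q, p) ∉ A ∧ IsArc (q, p) ∧ Intersects (q, p) (m, n) ∧
      ∀ c ∈ A, c ≠ (m, n) → ¬ Intersects (q, p) c := by
  obtain ⟨hmp, hpn, hEmp, hEpn⟩ := hI
  obtain ⟨hqm, hqn, hEqm⟩ := hO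
  have nc := hA.1.2
  have hmn : m ≤ n - 2 := hA.1.1 _ ha
  have hcross : Intersects (q, p) (m, n) := intersects_mk (by omega)
  refine ⟨fun hmem => nc _ hmem _ ha hcross, isArc_mk (by omega), hcross, ?_⟩
  rintro ⟨s, t⟩ hc hne hx
  rcases intersects_elim hx with ⟨h1, h2, h3⟩ | ⟨h1, h2, h3⟩
  · rcases lt_trichotomy s m with h4 | h4 | h4
    · rcases lt_trichotomy t n with h5 | h5 | h5
      · exact nc _ ha _ hc (intersects_mk (by omega))
      · subst h5
        rcases hEqm with hqm' | hqm'
        · exact nc _ hqm' _ hc (intersects_mk (by omega))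
        · omega
      · exact nc _ hqn _ hc (intersects_mk (by omega))
    · subst h4
      rcases lt_trichotomy t n with h5 | h5 | h5
      · rcases hEpn with hpn' | hpn'
        · exact nc _ hc _ hpn' (intersects_mk (by omega))
        · omega
      · exact hne (by rw [h5])
      · exact nc _ hqn _ hc (intersects_mk (by omega))
    · rcases hEmp with hmp' | hmp'
      · exact nc _ hmp' _ hc (intersects_mk (by omega))
      · omega
  · rcases lt_trichotomy t m with h4 | h4 | h4
    · exact nc _ hc _ hqn (intersects_mk (by omega))
    · subst h4
      exact nc _ hc _ hqn (intersects_mk (by omega))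
    · exact nc _ ha _ hc (intersects_mk (by omega))

end ArcAux

namespace ArcAux

variable {A : Set (ℤ × ℤ)}

lemma decomp (hA : MaximalNonIntersecting A) {m n s t : ℤ} (ha : (m, n) ∈ A)
    (hbA : (s, t) ∉ A) (hcross : Intersects (s, t) (m, n))
    (hno : ∀ c ∈ A, c ≠ (m, n) → ¬ Intersects (s, t) c) :
    (Inner A m n s ∧ OutR A m n t) ∨ (Inner A m n t ∧ OutL A m n s) := by
  have nc := hA.1.2
  have hmn : m ≤ n - 2 := hA.1.1 _ ha
  rcases intersects_elim hcross with ⟨k1, k2, k3⟩ | ⟨k1, k2, k3⟩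
  · -- left-ish case : s < m < t < n
    right
    have hEmt : Edge A m t := by
      by_cases h0 : t = m + 1
      · exact Or.inr h0
      by_cases h1 : (m, t) ∈ A
      · exact Or.inl h1
      exfalso
      obtain ⟨⟨u, v⟩, hc, hx⟩ := hA.2 (m, t) (isArc_mk (by omega)) h1
      rcases intersects_elim hx with ⟨g1, g2, g3⟩ | ⟨g1, g2, g3⟩
      · exact hno (u, v) hc (by intro hEq; rw [Prod.mk.injEq] at hEq; omega)
          (intersects_mk (by omega))
      · rcases lt_or_ge u s with g4 | g4
        · exact hno (u, v) hc (by intro hEq; rw [Prod.mk.injEq] at hEq; omega)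
            (intersects_mk (by omega))
        · exact nc _ ha _ hc (intersects_mk (by omega))
    have hEtn : Edge A t n := by
      by_cases h0 : n = t + 1
      · exact Or.inr h0
      by_cases h1 : (t, n) ∈ A
      · exact Or.inl h1
      exfalso
      obtain ⟨⟨u, v⟩, hc, hx⟩ := hA.2 (t, n) (isArc_mk (by omega)) h1
      rcases intersects_elim hx with ⟨g1, g2, g3⟩ | ⟨g1, g2, g3⟩
      · exact nc _ ha _ hc (intersects_mk (by omega))
      · rcases lt_or_ge s u with g4 | g4
        · exact hno (u, v) hc (by intro hEq; rw [Prod.mk.injEq] at hEq; omega)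
            (intersects_mk (by omega))
        · exact nc _ ha _ hc (intersects_mk (by omega))
    have hsn : (s, n) ∈ A := by
      by_contra h1
      obtain ⟨⟨u, v⟩, hc, hx⟩ := hA.2 (s, n) (isArc_mk (by omega)) h1
      rcases intersects_elim hx with ⟨g1, g2, g3⟩ | ⟨g1, g2, g3⟩
      · rcases le_or_gt u m with g4 | g4
        · exact hno (u, v) hc (by intro hEq; rw [Prod.mk.injEq] at hEq; omega)
            (intersects_mk (by omega))
        · exact nc _ ha _ hc (intersects_mk (by omega))
      · rcases lt_or_ge v t with g4 | g4
        · exact hno (u, v) hc (by intro hEq; rw [Prod.mk.injEq] at hEq; omega)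
            (intersects_mk (by omega))
        · exact nc _ ha _ hc (intersects_mk (by omega))
    have hEsm : Edge A s m := by
      by_cases h0 : m = s + 1
      · exact Or.inr h0
      by_cases h1 : (s, m) ∈ A
      · exact Or.inl h1
      exfalso
      obtain ⟨⟨u, v⟩, hc, hx⟩ := hA.2 (s, m) (isArc_mk (by omega)) h1
      rcases intersects_elim hx with ⟨g1, g2, g3⟩ | ⟨g1, g2, g3⟩
      · rcases lt_trichotomy v n with g4 | g4 | g4
        · exact nc _ ha _ hc (intersects_mk (by omega))
        · exact hno (u, v) hc (by intro hEq; rw [Prod.mk.injEq] at hEq; omega)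
            (intersects_mk (by omega))
        · exact nc _ hsn _ hc (intersects_mk (by omega))
      · exact nc _ hsn _ hc (intersects_mk (by omega))
    exact ⟨⟨k2, k3, hEmt, hEtn⟩, k1, hsn, hEsm⟩
  · -- right-ish case : m < s < n < t
    left
    have hEms : Edge A m s := by
      by_cases h0 : s = m + 1
      · exact Or.inr h0
      by_cases h1 : (m, s) ∈ A
      · exact Or.inl h1
      exfalso
      obtain ⟨⟨u, v⟩, hc, hx⟩ := hA.2 (m, s) (isArc_mk (by omega)) h1
      rcases intersects_elim hx with ⟨g1, g2, g3⟩ | ⟨g1, g2, g3⟩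
      · rcases le_or_gt v n with g4 | g4
        · exact hno (u, v) hc (by intro hEq; rw [Prod.mk.injEq] at hEq; omega)
            (intersects_mk (by omega))
        · exact nc _ ha _ hc (intersects_mk (by omega))
      · exact nc _ ha _ hc (intersects_mk (by omega))
    have hEsn : Edge A s n := by
      by_cases h0 : n = s + 1
      · exact Or.inr h0
      by_cases h1 : (s, n) ∈ A
      · exact Or.inl h1
      exfalso
      obtain ⟨⟨u, v⟩, hc, hx⟩ := hA.2 (s, n) (isArc_mk (by omega)) h1
      rcases intersects_elim hx with ⟨g1, g2, g3⟩ | ⟨g1, g2, g3⟩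
      · exact nc _ ha _ hc (intersects_mk (by omega))
      · exact hno (u, v) hc (by intro hEq; rw [Prod.mk.injEq] at hEq; omega)
          (intersects_mk (by omega))
    have hmt : (m, t) ∈ A := by
      by_contra h1
      obtain ⟨⟨u, v⟩, hc, hx⟩ := hA.2 (m, t) (isArc_mk (by omega)) h1
      rcases intersects_elim hx with ⟨g1, g2, g3⟩ | ⟨g1, g2, g3⟩
      · rcases lt_or_ge u n with g4 | g4
        · exact nc _ ha _ hc (intersects_mk (by omega))
        · exact hno (u, v) hc (by intro hEq; rw [Prod.mk.injEq] at hEq; omega)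
            (intersects_mk (by omega))
      · rcases lt_or_ge v n with g4 | g4
        · exact nc _ ha _ hc (intersects_mk (by omega))
        · exact hno (u, v) hc (by intro hEq; rw [Prod.mk.injEq] at hEq; omega)
            (intersects_mk (by omega))
    have hEnt : Edge A n t := by
      by_cases h0 : t = n + 1
      · exact Or.inr h0
      by_cases h1 : (n, t) ∈ A
      · exact Or.inl h1
      exfalso
      obtain ⟨⟨u, v⟩, hc, hx⟩ := hA.2 (n, t) (isArc_mk (by omega)) h1
      rcases intersects_elim hx with ⟨g1, g2, g3⟩ | ⟨g1, g2, g3⟩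
      · exact hno (u, v) hc (by intro hEq; rw [Prod.mk.injEq] at hEq; omega)
          (intersects_mk (by omega))
      · rcases lt_trichotomy u m with g4 | g4 | g4
        · exact nc _ hmt _ hc (intersects_mk (by omega))
        · exact hno (u, v) hc (by intro hEq; rw [Prod.mk.injEq] at hEq; omega)
            (intersects_mk (by omega))
        · rcases lt_or_ge u s with g5 | g5
          · exact hno (u, v) hc (by intro hEq; rw [Prod.mk.injEq] at hEq; omega)
              (intersects_mk (by omega))
          · exact nc _ ha _ hc (intersects_mk (by omega))
    exact ⟨⟨k1, k2, hEms, hEsn⟩, k3, hmt, hEnt⟩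

end ArcAux

namespace ArcAux

variable {A : Set (ℤ × ℤ)}

/-- The key exchange property: there is exactly one arc outside `A` which
crosses `(m,n)` but no other arc of `A`. -/
lemma crux (hA : MaximalNonIntersecting A)
    (h : LocallyFiniteArcs A ∨ ∃ v : ℤ, LeftFountain A v ∧ RightFountain A v)
    {m n : ℤ} (ha : (m, n) ∈ A) :
    ∃! b : ℤ × ℤ, b ∉ A ∧ IsArc b ∧ Intersects b (m, n) ∧
      ∀ c ∈ A, c ≠ (m, n) → ¬ Intersects b c := by
  have hmn : m ≤ n - 2 := hA.1.1 _ ha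
  obtain ⟨p, hp⟩ := inner_exists hA ha
  rcases outer_exists hA h ha with ⟨q, hq⟩ | ⟨q, hq⟩
  · obtain ⟨h1, h2, h3, h4⟩ := flip_works_right hA ha hp hq
    refine ⟨(p, q), ⟨h1, h2, h3, h4⟩, ?_⟩
    rintro ⟨s, t⟩ ⟨g1, g2, g3, g4⟩
    rcases decomp hA ha g1 g3 g4 with ⟨hI', hO'⟩ | ⟨hI', hO'⟩
    · rw [Prod.mk.injEq]
      exact ⟨inner_unique hA hI' hp, outR_unique hA (by omega) hO' hq⟩
    · exact absurd hO' (fun hL' => outRL_false hA (by omega) hq hL')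
  · obtain ⟨h1, h2, h3, h4⟩ := flip_works_left hA ha hp hq
    refine ⟨(q, p), ⟨h1, h2, h3, h4⟩, ?_⟩
    rintro ⟨s, t⟩ ⟨g1, g2, g3, g4⟩
    rcases decomp hA ha g1 g3 g4 with ⟨hI', hO'⟩ | ⟨hI', hO'⟩
    · exact absurd hq (fun hL' => outRL_false hA (by omega) hO' hL')
    · rw [Prod.mk.injEq]
      exact ⟨outL_unique hA (by omega) hO' hq, inner_unique hA hI' hp⟩

end ArcAux

open ArcAux

/-- Mutation of arcs: in a maximal set of non-intersecting arcs which is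
locally finite or has a fountain, each arc can be exchanged for a unique other
arc so that a maximal set of non-intersecting arcs again results. -/
theorem arc_mutation (A : Set (ℤ × ℤ)) (hA : MaximalNonIntersecting A)
    (h : LocallyFiniteArcs A ∨ ∃ v : ℤ, LeftFountain A v ∧ RightFountain A v)
    (a : ℤ × ℤ) (ha : a ∈ A) :
    ∃! b : ℤ × ℤ, b ≠ a ∧ IsArc b ∧
      MaximalNonIntersecting ((A \ {a}) ∪ {b}) := by
  obtain ⟨m, n⟩ := a
  have nc := hA.1.2
  have harc := hA.1.1
  have hmn : m ≤ n - 2 := harc _ ha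
  obtain ⟨b, ⟨hbA, hbarc, hbx, hbno⟩, hbu⟩ := ArcAux.crux hA h ha
  have hbne : b ≠ (m, n) := fun he => hbA (he ▸ ha)
  refine ⟨b, ⟨hbne, hbarc, ⟨⟨?_, ?_⟩, ?_⟩⟩, ?_⟩
  · -- all elements are arcs
    rintro x (⟨hxA, _⟩ | rfl)
    · exact harc _ hxA
    · exact hbarc
  · -- pairwise non-intersecting
    rintro x (⟨hxA, hxne⟩ | rfl) y (⟨hyA, hyne⟩ | rfl)
    · exact nc _ hxA _ hyA
    · exact fun hxy => hbno x hxA (fun hh => hxne hh) (intersects_comm hxy)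
    · exact hbno y hyA (fun hh => hyne hh)
    · intro hxy
      rcases hxy with ⟨h1, _⟩ | ⟨h1, _⟩ <;> exact lt_irrefl _ h1
  · -- maximality
    intro x hxarc hxmem
    by_cases hxa : x = (m, n)
    · subst hxa
      exact ⟨b, Or.inr rfl, intersects_comm hbx⟩
    by_cases hex : ∃ c ∈ A, c ≠ (m, n) ∧ Intersects x c
    · obtain ⟨c, hc, hcne, hxc⟩ := hex
      exact ⟨c, Or.inl ⟨hc, hcne⟩, hxc⟩
    · have hxA : x ∉ A := fun hxA => hxmem (Or.inl ⟨hxA, hxa⟩)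
      obtain ⟨c, hcA, hxc⟩ := hA.2 x hxarc hxA
      have hca : c = (m, n) := by
        by_contra hne
        exact hex ⟨c, hcA, hne, hxc⟩
      subst hca
      have hxb : x = b :=
        hbu x ⟨hxA, hxarc, hxc, fun c' hc' hne' hx' => absurd ⟨c', hc', hne', hx'⟩ hex⟩
      exact absurd (Or.inr hxb) hxmem
  · -- uniqueness
    rintro b' ⟨hb'ne, hb'arc, hb'M⟩
    apply hbu
    have hnotmem : (m, n) ∉ (A \ {(m, n)}) ∪ {b'} := by
      rintro (⟨_, hne⟩ | he)
      · exact hne rfl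
      · exact hb'ne (Eq.symm he)
    have hb'A : b' ∉ A := by
      intro hb'A
      obtain ⟨c, hc, hx⟩ := hb'M.2 (m, n) (isArc_mk hmn) hnotmem
      rcases hc with ⟨hcA, _⟩ | rfl
      · exact nc _ ha _ hcA hx
      · exact nc _ ha _ hb'A hx
    refine ⟨hb'A, hb'arc, ?_, ?_⟩
    · obtain ⟨c, hc, hx⟩ := hb'M.2 (m, n) (isArc_mk hmn) hnotmem
      rcases hc with ⟨hcA, _⟩ | rfl
      · exact absurd hx (nc _ ha _ hcA)
      · exact intersects_comm hx
    · intro c hc hne hx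
      exact hb'M.1.2 b' (Or.inr rfl) c (Or.inl ⟨hc, hne⟩) hx
end
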